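/- Let Ω be a nonempty finite set, p a full-support probability vector on Ω, and n ≥ 1. The set of all feasible collections (μ^ω)_{ω∈Ω} of conditional belief distributions for prior p, regarded as a subset of the product (𝒫(Δ(Ω)^n))^Ω of |Ω| copies of the space of Borel probability measures on Δ(Ω)^n, is convex and is closed in the product of the topologies of weak convergence of measures. -/

import Mathlib

open MeasureTheory

noncomputable section

abbrev Belief (Ω : Type) [Fintype Ω] : Type := stdSimplex ℝ Ω

variable {Ω : Type} [Fintype Ω] [MeasurableSpace Ω] [MeasurableSingletonClass Ω]

/-- The joint distribution of state and beliefs. -/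
def jointP (p : Ω → ℝ) {X : Type} [MeasurableSpace X] (μ : Ω → Measure X) :
    Measure (Ω × X) :=
  ∑ ω : Ω, ENNReal.ofReal (p ω) • ((Measure.dirac ω).prod (μ ω))

/-- Feasibility of a collection of conditional belief distributions, n receivers. -/
def Feasible (p : Ω → ℝ) (n : ℕ) (μ : Ω → Measure (Fin n → Belief Ω)) : Prop :=
  (∀ ω, IsProbabilityMeasure (μ ω)) ∧
  ∀ (i : Fin n) (ω' : Ω),
    (fun z : Ω × (Fin n → Belief Ω) => (z.2 i).1 ω')
      =ᵐ[jointP p μ]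
      (jointP p μ)[Set.indicator {z : Ω × (Fin n → Belief Ω) | z.1 = ω'} (fun _ => (1 : ℝ)) |
        MeasurableSpace.comap (fun z : Ω × (Fin n → Belief Ω) => z.2 i) inferInstance]

/-- Feasibility of a collection of conditional belief distributions, single receiver. -/
def Feasible1 (p : Ω → ℝ) (lam : Ω → Measure (Belief Ω)) : Prop :=
  (∀ ω, IsProbabilityMeasure (lam ω)) ∧
  ∀ ω' : Ω,
    (fun z : Ω × Belief Ω => (z.2).1 ω')
      =ᵐ[jointP p lam]
      (jointP p lam)[Set.indicator {z : Ω × Belief Ω | z.1 = ω'} (fun _ => (1 : ℝ)) |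
        MeasurableSpace.comap (fun z : Ω × Belief Ω => z.2) inferInstance]

/-- the value of the persuasion problem -/
def Val (p : Ω → ℝ) (n : ℕ) (v : Ω → (Fin n → Belief Ω) → ℝ) : ℝ :=
  sSup { r | ∃ μ : Ω → Measure (Fin n → Belief Ω),
    Feasible p n μ ∧ r = ∑ ω : Ω, p ω * ∫ x, v ω x ∂(μ ω) }

end


noncomputable section FeasibleAux
set_option linter.unusedSectionVars false
set_option linter.unusedVariables false
open scoped NNReal ENNReal

variable {Ω : Type} [Fintype Ω] [MeasurableSpace Ω] [MeasurableSingletonClass Ω]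


variable {Ω : Type} [Fintype Ω] [MeasurableSpace Ω] [MeasurableSingletonClass Ω]

instance : CompactSpace (Belief Ω) := isCompact_iff_compactSpace.mp (isCompact_stdSimplex ℝ Ω)

lemma belief_nonneg (b : Belief Ω) (ω : Ω) : 0 ≤ b.1 ω := b.2.1 ω
lemma belief_le_one (b : Belief Ω) (ω : Ω) : b.1 ω ≤ 1 := by
  have := b.2.2
  calc b.1 ω ≤ ∑ x, b.1 x := Finset.single_le_sum (fun i _ => b.2.1 i) (Finset.mem_univ ω)
  _ = 1 := b.2.2

lemma integrable_of_bdd {α : Type*} [MeasurableSpace α] {μ : Measure α} [IsFiniteMeasure μ]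
    {F : α → ℝ} (hm : AEStronglyMeasurable F μ) (C : ℝ) (hC : ∀ a, |F a| ≤ C) :
    Integrable F μ :=
  Integrable.mono' (integrable_const C) hm (Filter.Eventually.of_forall fun a => by
    simpa [Real.norm_eq_abs] using hC a)

lemma integral_jointP {X : Type} [MeasurableSpace X] (p : Ω → ℝ) (hp : ∀ ω, 0 ≤ p ω)
    (μ : Ω → Measure X) [∀ ω, IsProbabilityMeasure (μ ω)] (F : Ω × X → ℝ)
    (hF : ∀ ω, Integrable (fun x => F (ω, x)) (μ ω)) :
    ∫ z, F z ∂(jointP p μ) = ∑ ω, p ω * ∫ x, F (ω, x) ∂(μ ω) := by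
  rw [jointP, integral_finset_sum_measure]
  · refine Finset.sum_congr rfl fun ω _ => ?_
    rw [integral_smul_measure, Measure.dirac_prod,
      (measurableEmbedding_prodMk_left ω).integral_map,
      ENNReal.toReal_ofReal (hp ω), smul_eq_mul]
  · intro ω _
    refine Integrable.smul_measure ?_ ENNReal.ofReal_ne_top
    rw [Measure.dirac_prod, (measurableEmbedding_prodMk_left ω).integrable_map_iff]
    exact hF ω

lemma isProb_jointP (p : Ω → ℝ) (hp : ∀ ω, 0 ≤ p ω) (hpsum : ∑ ω, p ω = 1)
    {X : Type} [MeasurableSpace X] (μ : Ω → Measure X) [∀ ω, IsProbabilityMeasure (μ ω)] :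
    IsProbabilityMeasure (jointP p μ) := by
  constructor
  rw [jointP]
  rw [Measure.finset_sum_apply]
  simp only [Measure.smul_apply, smul_eq_mul]
  have : ∀ ω : Ω, ((Measure.dirac ω).prod (μ ω)) Set.univ = 1 := fun ω => by
    haveI : IsProbabilityMeasure ((Measure.dirac ω).prod (μ ω)) := by infer_instance
    exact measure_univ
  simp_rw [this, mul_one, ← ENNReal.ofReal_sum_of_nonneg (fun ω _ => hp ω), hpsum,
    ENNReal.ofReal_one]

section Kappa
variable {n : ℕ}

/-- pushforward of `z ↦ (z.2 i).1 ω' · (jointP p μ)` under `z ↦ z.2 i`, built directly. -/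
def kappa1 (p : Ω → ℝ) (μ : Ω → Measure (Fin n → Belief Ω)) (i : Fin n) (ω' : Ω) :
    Measure (Belief Ω) :=
  ∑ ω : Ω, ENNReal.ofReal (p ω) •
    (((μ ω).map (fun x => x i)).withDensity (fun b => ENNReal.ofReal (b.1 ω')))

def kappa2 (p : Ω → ℝ) (μ : Ω → Measure (Fin n → Belief Ω)) (i : Fin n) (ω' : Ω) :
    Measure (Belief Ω) :=
  ENNReal.ofReal (p ω') • (μ ω').map (fun x => x i)

variable (p : Ω → ℝ) (μ : Ω → Measure (Fin n → Belief Ω)) [∀ ω, IsProbabilityMeasure (μ ω)]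
  (i : Fin n) (ω' : Ω)

lemma meas_xi : Measurable (fun x : Fin n → Belief Ω => x i) := measurable_pi_apply i

lemma meas_eval : Measurable (fun b : Belief Ω => b.1 ω') :=
  (measurable_pi_apply ω').comp measurable_subtype_coe

lemma cont_eval : Continuous (fun b : Belief Ω => b.1 ω') :=
  (continuous_apply ω').comp continuous_subtype_val

lemma lintegral_density_ne_top (ν : Measure (Belief Ω)) [IsFiniteMeasure ν] :
    ∫⁻ b, ENNReal.ofReal (b.1 ω') ∂ν ≠ ⊤ := by
  refine ne_top_of_le_ne_top (measure_ne_top ν Set.univ) ?_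
  calc ∫⁻ b, ENNReal.ofReal (b.1 ω') ∂ν ≤ ∫⁻ _, 1 ∂ν :=
        lintegral_mono fun b => ENNReal.ofReal_le_one.mpr (belief_le_one b ω')
  _ = ν Set.univ := by simp

instance kappa1_finite : IsFiniteMeasure (kappa1 p μ i ω') := by
  rw [kappa1]
  haveI : ∀ ω : Ω, IsFiniteMeasure (ENNReal.ofReal (p ω) •
      (((μ ω).map (fun x => x i)).withDensity (fun b => ENNReal.ofReal (b.1 ω')))) := by
    intro ω
    haveI : IsFiniteMeasure ((μ ω).map (fun x => x i)) :=
      Measure.isFiniteMeasure_map _ _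
    haveI := isFiniteMeasure_withDensity (lintegral_density_ne_top ω' ((μ ω).map (fun x => x i)))
    exact Measure.smul_finite _ ENNReal.ofReal_ne_top
  refine ⟨?_⟩
  rw [Measure.finset_sum_apply]
  exact ENNReal.sum_lt_top.mpr fun ω _ => measure_lt_top _ _

instance kappa2_finite : IsFiniteMeasure (kappa2 p μ i ω') := by
  rw [kappa2]
  exact ((μ ω').map (fun x => x i)).smul_finite ENNReal.ofReal_ne_top

end Kappa

section KappaMore
variable {n : ℕ}
variable (p : Ω → ℝ) (μ : Ω → Measure (Fin n → Belief Ω)) [∀ ω, IsProbabilityMeasure (μ ω)]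
  (i : Fin n) (ω' : Ω)

lemma meas_pre : Measurable (fun z : Ω × (Fin n → Belief Ω) => z.2 i) :=
  (measurable_pi_apply i).comp measurable_snd

-- real set-integral vs lintegral on belief coordinate
lemma setint_eq (ω : Ω) (S : Set (Belief Ω)) (hS : MeasurableSet S) :
    ∫ x in (fun x : Fin n → Belief Ω => x i) ⁻¹' S, (x i).1 ω' ∂(μ ω)
      = (∫⁻ x in (fun x : Fin n → Belief Ω => x i) ⁻¹' S,
          ENNReal.ofReal ((x i).1 ω') ∂(μ ω)).toReal := by
  rw [integral_eq_lintegral_of_nonneg_ae]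
  · exact Filter.Eventually.of_forall fun x => belief_nonneg (x i) ω'
  · exact ((meas_eval ω').comp (meas_xi i)).aestronglyMeasurable

lemma kappa1_apply (S : Set (Belief Ω)) (hS : MeasurableSet S) :
    kappa1 p μ i ω' S = ∑ ω : Ω, ENNReal.ofReal (p ω) *
      ∫⁻ x in (fun x : Fin n → Belief Ω => x i) ⁻¹' S, ENNReal.ofReal ((x i).1 ω') ∂(μ ω) := by
  rw [kappa1, Measure.finset_sum_apply]
  refine Finset.sum_congr rfl fun ω _ => ?_
  rw [Measure.smul_apply, smul_eq_mul, withDensity_apply _ hS,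
    setLIntegral_map hS ((meas_eval ω').ennreal_ofReal) (meas_xi i)]

lemma kappa2_apply (S : Set (Belief Ω)) (hS : MeasurableSet S) :
    kappa2 p μ i ω' S = ENNReal.ofReal (p ω') * μ ω' ((fun x : Fin n → Belief Ω => x i) ⁻¹' S) := by
  rw [kappa2, Measure.smul_apply, smul_eq_mul, Measure.map_apply (meas_xi i) hS]

lemma E1 (hp : ∀ ω, 0 ≤ p ω) (S : Set (Belief Ω)) (hS : MeasurableSet S) :
    ∫ z in (fun z : Ω × (Fin n → Belief Ω) => z.2 i) ⁻¹' S, (z.2 i).1 ω' ∂(jointP p μ)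
      = (kappa1 p μ i ω' S).toReal := by
  have hpre : MeasurableSet ((fun z : Ω × (Fin n → Belief Ω) => z.2 i) ⁻¹' S) :=
    (meas_pre i) hS
  rw [← integral_indicator hpre]
  have hind : ∀ z : Ω × (Fin n → Belief Ω),
      Set.indicator ((fun z : Ω × (Fin n → Belief Ω) => z.2 i) ⁻¹' S)
        (fun z => (z.2 i).1 ω') z
      = Set.indicator ((fun x : Fin n → Belief Ω => x i) ⁻¹' S)
          (fun x => (x i).1 ω') z.2 := by
    intro z; rfl
  simp_rw [hind]
  rw [integral_jointP p hp μ _ (fun ω => ?_)]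
  · simp_rw [integral_indicator ((meas_xi (n := n) i) hS)]
    rw [kappa1_apply p μ i ω' S hS, ENNReal.toReal_sum (fun ω _ => ?_)]
    · refine Finset.sum_congr rfl fun ω _ => ?_
      rw [setint_eq μ i ω' ω S hS, ENNReal.toReal_mul, ENNReal.toReal_ofReal (hp ω)]
    · exact ENNReal.mul_ne_top ENNReal.ofReal_ne_top
        (ne_top_of_le_ne_top (measure_ne_top (μ ω) Set.univ)
          (setLIntegral_le_meas ((meas_xi (n := n) i) hS)
            (fun x _ _ => ENNReal.ofReal_le_one.mpr (belief_le_one (x i) ω'))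
            (fun x _ hx => absurd (Set.mem_univ x) hx)))
  · refine integrable_of_bdd ?_ 1 ?_
    · exact (((meas_eval ω').comp (meas_xi i)).indicator ((meas_xi (n := n) i) hS)).aestronglyMeasurable
    · intro x
      classical
      rw [Set.indicator_apply]
      split
      · rw [abs_of_nonneg (belief_nonneg _ _)]; exact belief_le_one _ _
      · simp

lemma E2 (hp : ∀ ω, 0 ≤ p ω) (S : Set (Belief Ω)) (hS : MeasurableSet S) :
    ∫ z in (fun z : Ω × (Fin n → Belief Ω) => z.2 i) ⁻¹' S,
      Set.indicator {z : Ω × (Fin n → Belief Ω) | z.1 = ω'} (fun _ => (1 : ℝ)) z ∂(jointP p μ)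
      = (kappa2 p μ i ω' S).toReal := by
  classical
  have hpre : MeasurableSet ((fun z : Ω × (Fin n → Belief Ω) => z.2 i) ⁻¹' S) :=
    (meas_pre i) hS
  rw [← integral_indicator hpre]
  have key : ∀ z : Ω × (Fin n → Belief Ω),
      Set.indicator ((fun z : Ω × (Fin n → Belief Ω) => z.2 i) ⁻¹' S)
        (Set.indicator {z : Ω × (Fin n → Belief Ω) | z.1 = ω'} (fun _ => (1 : ℝ))) z
      = if z.1 = ω' then Set.indicator ((fun x : Fin n → Belief Ω => x i) ⁻¹' S)
          (fun _ => (1 : ℝ)) z.2 else 0 := by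
    intro z
    by_cases h1 : z.2 i ∈ S <;> by_cases h2 : z.1 = ω' <;>
      simp [Set.indicator_apply, h1, h2]
  simp_rw [key]
  rw [integral_jointP p hp μ _ (fun ω => ?_)]
  · have : ∀ ω : Ω, ∫ x, (if (ω, x).1 = ω' then Set.indicator
        ((fun x : Fin n → Belief Ω => x i) ⁻¹' S) (fun _ => (1 : ℝ)) (ω, x).2 else 0) ∂(μ ω)
        = if ω = ω' then (μ ω ((fun x : Fin n → Belief Ω => x i) ⁻¹' S)).toReal else 0 := by
      intro ω
      by_cases h : ω = ω'
      · simp only [h, if_true]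
        exact integral_indicator_one ((meas_xi (n := n) i) hS)
      · simp [h]
    simp_rw [this, mul_ite, mul_zero]
    rw [Finset.sum_ite_eq' Finset.univ ω']
    simp only [Finset.mem_univ, if_true]
    rw [kappa2_apply p μ i ω' S hS, ENNReal.toReal_mul, ENNReal.toReal_ofReal (hp ω')]
  · have hfun : (fun x : Fin n → Belief Ω => if (ω, x).1 = ω' then Set.indicator
        ((fun x : Fin n → Belief Ω => x i) ⁻¹' S) (fun _ => (1 : ℝ)) x else 0)
        = if ω = ω' then (Set.indicator ((fun x : Fin n → Belief Ω => x i) ⁻¹' S)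
            (fun _ => (1 : ℝ))) else (fun _ => 0) := by
      split_ifs with h <;> funext x <;> simp [h]
    rw [hfun]
    split_ifs with h
    · refine integrable_of_bdd (measurable_const.indicator ((meas_xi (n := n) i) hS)).aestronglyMeasurable 1 ?_
      intro x
      by_cases h2 : x ∈ (fun x : Fin n → Belief Ω => x i) ⁻¹' S <;> simp [Set.indicator_apply, h2]
    · simpa using integrable_const (0 : ℝ) (μ := μ ω)

lemma E3 (hp : ∀ ω, 0 ≤ p ω) (g : BoundedContinuousFunction (Belief Ω) ℝ) :
    ∫ b, g b ∂(kappa1 p μ i ω') = ∑ ω, p ω * ∫ x, (x i).1 ω' * g (x i) ∂(μ ω) := by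
  rw [kappa1, integral_finset_sum_measure (fun ω _ => ?_)]
  · refine Finset.sum_congr rfl fun ω _ => ?_
    rw [integral_smul_measure, ENNReal.toReal_ofReal (hp ω), smul_eq_mul]
    congr 1
    have hwd : (((μ ω).map (fun x => x i)).withDensity (fun b => ENNReal.ofReal (b.1 ω')))
        = (((μ ω).map (fun x => x i)).withDensity (fun b => ((Real.toNNReal (b.1 ω') : ℝ≥0) : ℝ≥0∞))) := rfl
    rw [hwd, integral_withDensity_eq_integral_smul ((meas_eval ω').real_toNNReal)]
    have : ∀ b : Belief Ω, (Real.toNNReal (b.1 ω') : ℝ≥0) • g b = b.1 ω' * g b := by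
      intro b
      rw [NNReal.smul_def, Real.coe_toNNReal _ (belief_nonneg b ω'), smul_eq_mul]
    simp_rw [this]
    rw [integral_map (meas_xi i).aemeasurable]
    exact (((cont_eval ω').mul g.continuous).stronglyMeasurable).aestronglyMeasurable
  · haveI : IsFiniteMeasure (((μ ω).map (fun x => x i)).withDensity
        (fun b => ENNReal.ofReal (b.1 ω'))) := by
      haveI : IsFiniteMeasure ((μ ω).map (fun x => x i)) := Measure.isFiniteMeasure_map _ _
      exact isFiniteMeasure_withDensity (lintegral_density_ne_top ω' _)
    exact (g.integrable _).smul_measure ENNReal.ofReal_ne_top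

lemma E4 (hp : ∀ ω, 0 ≤ p ω) (g : BoundedContinuousFunction (Belief Ω) ℝ) :
    ∫ b, g b ∂(kappa2 p μ i ω') = p ω' * ∫ x, g (x i) ∂(μ ω') := by
  rw [kappa2, integral_smul_measure, ENNReal.toReal_ofReal (hp ω'), smul_eq_mul]
  congr 1
  rw [integral_map (meas_xi i).aemeasurable]
  exact (g.continuous.stronglyMeasurable).aestronglyMeasurable

end KappaMore

section Char
variable {n : ℕ}

theorem feasible_iff_test (p : Ω → ℝ) (hp : ∀ ω, 0 < p ω) (hpsum : ∑ ω, p ω = 1)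
    (μ : Ω → Measure (Fin n → Belief Ω)) :
    Feasible p n μ ↔ (∀ ω, IsProbabilityMeasure (μ ω)) ∧
      ∀ (i : Fin n) (ω' : Ω) (g : BoundedContinuousFunction (Belief Ω) ℝ),
        ∑ ω, p ω * ∫ x, (x i).1 ω' * g (x i) ∂(μ ω) = p ω' * ∫ x, g (x i) ∂(μ ω') := by
  have hp' : ∀ ω, 0 ≤ p ω := fun ω => (hp ω).le
  constructor
  · rintro ⟨hprob, hcond⟩
    refine ⟨hprob, fun i ω' g => ?_⟩
    haveI := hprob
    haveI : IsProbabilityMeasure (jointP p μ) := isProb_jointP p hp' hpsum μ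
    have hm : MeasurableSpace.comap (fun z : Ω × (Fin n → Belief Ω) => z.2 i) inferInstance
        ≤ (inferInstance : MeasurableSpace (Ω × (Fin n → Belief Ω))) := (meas_pre i).comap_le
    haveI : SigmaFinite ((jointP p μ).trim hm) := inferInstance
    have hf_int : Integrable (Set.indicator {z : Ω × (Fin n → Belief Ω) | z.1 = ω'}
        (fun _ => (1 : ℝ))) (jointP p μ) :=
      (integrable_const (1 : ℝ)).indicator (measurable_fst (measurableSet_singleton ω'))
    have hκ : kappa1 p μ i ω' = kappa2 p μ i ω' := by
      ext S hS
      have e1 := E1 p μ i ω' hp' S hS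
      have e2 := E2 p μ i ω' hp' S hS
      have hsm : MeasurableSet[MeasurableSpace.comap
          (fun z : Ω × (Fin n → Belief Ω) => z.2 i) inferInstance]
          ((fun z : Ω × (Fin n → Belief Ω) => z.2 i) ⁻¹' S) := ⟨S, hS, rfl⟩
      have heq : ∫ z in (fun z : Ω × (Fin n → Belief Ω) => z.2 i) ⁻¹' S,
            (z.2 i).1 ω' ∂(jointP p μ)
          = ∫ z in (fun z : Ω × (Fin n → Belief Ω) => z.2 i) ⁻¹' S,
            Set.indicator {z : Ω × (Fin n → Belief Ω) | z.1 = ω'} (fun _ => (1 : ℝ)) z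
            ∂(jointP p μ) := by
        rw [integral_congr_ae (ae_restrict_of_ae (hcond i ω'))]
        exact setIntegral_condExp hm hf_int hsm
      rw [← ENNReal.toReal_eq_toReal_iff' (measure_ne_top _ _) (measure_ne_top _ _), ← e1, ← e2, heq]
    calc ∑ ω, p ω * ∫ x, (x i).1 ω' * g (x i) ∂(μ ω)
        = ∫ b, g b ∂(kappa1 p μ i ω') := (E3 p μ i ω' hp' g).symm
      _ = ∫ b, g b ∂(kappa2 p μ i ω') := by rw [hκ]
      _ = p ω' * ∫ x, g (x i) ∂(μ ω') := E4 p μ i ω' hp' g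
  · rintro ⟨hprob, htest⟩
    refine ⟨hprob, fun i ω' => ?_⟩
    haveI := hprob
    haveI : IsProbabilityMeasure (jointP p μ) := isProb_jointP p hp' hpsum μ
    have hm : MeasurableSpace.comap (fun z : Ω × (Fin n → Belief Ω) => z.2 i) inferInstance
        ≤ (inferInstance : MeasurableSpace (Ω × (Fin n → Belief Ω))) := (meas_pre i).comap_le
    haveI : SigmaFinite ((jointP p μ).trim hm) := inferInstance
    have hf_int : Integrable (Set.indicator {z : Ω × (Fin n → Belief Ω) | z.1 = ω'}
        (fun _ => (1 : ℝ))) (jointP p μ) :=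
      (integrable_const (1 : ℝ)).indicator (measurable_fst (measurableSet_singleton ω'))
    have hκ : kappa1 p μ i ω' = kappa2 p μ i ω' := by
      refine ext_of_forall_lintegral_eq_of_IsFiniteMeasure (fun f0 => ?_)
      set g : BoundedContinuousFunction (Belief Ω) ℝ :=
        BoundedContinuousFunction.mkOfCompact
          ⟨fun b => (f0 b : ℝ), NNReal.continuous_coe.comp f0.continuous⟩ with hg
      have hgeq : ∀ b : Belief Ω, ((f0 b : ℝ≥0) : ℝ) = g b := fun b => rfl
      rw [lintegral_coe_eq_integral _ (g.integrable _), lintegral_coe_eq_integral _ (g.integrable _)]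
      congr 1
      simp_rw [hgeq]
      calc ∫ b, g b ∂(kappa1 p μ i ω')
          = ∑ ω, p ω * ∫ x, (x i).1 ω' * g (x i) ∂(μ ω) := E3 p μ i ω' hp' g
        _ = p ω' * ∫ x, g (x i) ∂(μ ω') := htest i ω' g
        _ = ∫ b, g b ∂(kappa2 p μ i ω') := (E4 p μ i ω' hp' g).symm
    have hπ : Measurable[MeasurableSpace.comap
        (fun z : Ω × (Fin n → Belief Ω) => z.2 i) inferInstance]
        (fun z : Ω × (Fin n → Belief Ω) => z.2 i) := Measurable.of_comap_le le_rfl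
    refine ae_eq_condExp_of_forall_setIntegral_eq hm hf_int (fun s _ _ => ?_) (fun s hs _ => ?_) ?_
    · refine (integrable_of_bdd ?_ 1 ?_).integrableOn
      · exact ((meas_eval ω').comp (meas_pre i)).aestronglyMeasurable
      · intro z
        rw [abs_of_nonneg (belief_nonneg _ _)]
        exact belief_le_one _ _
    · obtain ⟨S, hS, rfl⟩ := hs
      rw [E1 p μ i ω' hp' S hS, E2 p μ i ω' hp' S hS, hκ]
    · exact StronglyMeasurable.aestronglyMeasurable
        (Measurable.stronglyMeasurable ((meas_eval ω').comp hπ))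

end Char

section Main
variable {n : ℕ}

lemma integrable_A (κ : Measure (Fin n → Belief Ω)) [IsFiniteMeasure κ] (i : Fin n) (ω' : Ω)
    (g : BoundedContinuousFunction (Belief Ω) ℝ) :
    Integrable (fun x : Fin n → Belief Ω => (x i).1 ω' * g (x i)) κ := by
  refine integrable_of_bdd ?_ ‖g‖ ?_
  · exact (((cont_eval ω').comp (continuous_apply i)).mul
      (g.continuous.comp (continuous_apply i))).stronglyMeasurable.aestronglyMeasurable
  · intro x
    rw [abs_mul]
    calc |(x i).1 ω'| * |g (x i)| ≤ 1 * ‖g‖ := by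
          refine mul_le_mul ?_ ?_ (abs_nonneg _) zero_le_one
          · rw [abs_of_nonneg (belief_nonneg _ _)]; exact belief_le_one _ _
          · exact g.norm_coe_le_norm (x i)
      _ = ‖g‖ := one_mul _

lemma integrable_B (κ : Measure (Fin n → Belief Ω)) [IsFiniteMeasure κ] (i : Fin n)
    (g : BoundedContinuousFunction (Belief Ω) ℝ) :
    Integrable (fun x : Fin n → Belief Ω => g (x i)) κ := by
  refine integrable_of_bdd (g.continuous.comp (continuous_apply i)).stronglyMeasurable.aestronglyMeasurable ‖g‖ ?_
  intro x
  simpa [Real.norm_eq_abs] using g.norm_coe_le_norm (x i)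

lemma cont_int (F : BoundedContinuousFunction (Fin n → Belief Ω) ℝ) (ω : Ω) :
    Continuous fun m : Ω → ProbabilityMeasure (Fin n → Belief Ω) =>
      ∫ x, F x ∂((m ω : Measure (Fin n → Belief Ω))) := by
  have h1 : Continuous fun κ : ProbabilityMeasure (Fin n → Belief Ω) =>
      ∫ x, F x ∂(κ : Measure (Fin n → Belief Ω)) := by
    rw [continuous_iff_continuousAt]
    intro κ
    exact ProbabilityMeasure.tendsto_iff_forall_integral_tendsto.mp Filter.tendsto_id F
  exact h1.comp (continuous_apply ω)


end Main

end FeasibleAux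

/-- the set of feasible collections of conditional belief distributions is
convex and closed in the (product of the) topology of weak convergence
(Lemma `lm_closed_compact`). -/
theorem feasible_set_convex_and_closed
    {Ω : Type} [Fintype Ω] [Nonempty Ω] [MeasurableSpace Ω] [MeasurableSingletonClass Ω]
    (p : Ω → ℝ) (hp : ∀ ω, 0 < p ω) (hpsum : ∑ ω : Ω, p ω = 1)
    (n : ℕ) (hn : 1 ≤ n) :
    (∀ (μ ν : Ω → Measure (Fin n → Belief Ω)), Feasible p n μ → Feasible p n ν →
      ∀ t : ℝ, 0 ≤ t → t ≤ 1 →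
        Feasible p n (fun ω => ENNReal.ofReal t • μ ω + ENNReal.ofReal (1 - t) • ν ω)) ∧
    IsClosed { m : Ω → ProbabilityMeasure (Fin n → Belief Ω) |
      Feasible p n (fun ω => (m ω : Measure (Fin n → Belief Ω))) } := by
  constructor
  · intro μ ν hμ hν t ht ht1
    have hμ' := (feasible_iff_test p hp hpsum μ).mp hμ
    have hν' := (feasible_iff_test p hp hpsum ν).mp hν
    haveI hμp := hμ'.1
    haveI hνp := hν'.1
    have hone : ENNReal.ofReal t + ENNReal.ofReal (1 - t) = 1 := by
      rw [← ENNReal.ofReal_add ht (by linarith), add_sub_cancel, ENNReal.ofReal_one]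
    haveI hcombo : ∀ ω, IsProbabilityMeasure
        (ENNReal.ofReal t • μ ω + ENNReal.ofReal (1 - t) • ν ω) := by
      intro ω
      constructor
      simp only [Measure.add_apply, Measure.smul_apply, smul_eq_mul, measure_univ, mul_one]
      exact hone
    refine (feasible_iff_test p hp hpsum _).mpr ⟨hcombo, fun i ω' g => ?_⟩
    have expand : ∀ (F : (Fin n → Belief Ω) → ℝ) (ω : Ω),
        Integrable F (μ ω) → Integrable F (ν ω) →
        ∫ x, F x ∂(ENNReal.ofReal t • μ ω + ENNReal.ofReal (1 - t) • ν ω)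
          = t * ∫ x, F x ∂(μ ω) + (1 - t) * ∫ x, F x ∂(ν ω) := by
      intro F ω h1 h2
      rw [integral_add_measure (h1.smul_measure ENNReal.ofReal_ne_top)
          (h2.smul_measure ENNReal.ofReal_ne_top), integral_smul_measure, integral_smul_measure,
        ENNReal.toReal_ofReal ht, ENNReal.toReal_ofReal (by linarith), smul_eq_mul, smul_eq_mul]
    have eA : ∀ ω, ∫ x, (x i).1 ω' * g (x i)
          ∂(ENNReal.ofReal t • μ ω + ENNReal.ofReal (1 - t) • ν ω)
        = t * ∫ x, (x i).1 ω' * g (x i) ∂(μ ω) + (1 - t) * ∫ x, (x i).1 ω' * g (x i) ∂(ν ω) :=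
      fun ω => expand _ ω (integrable_A (μ ω) i ω' g) (integrable_A (ν ω) i ω' g)
    have eB : ∫ x, g (x i) ∂(ENNReal.ofReal t • μ ω' + ENNReal.ofReal (1 - t) • ν ω')
        = t * ∫ x, g (x i) ∂(μ ω') + (1 - t) * ∫ x, g (x i) ∂(ν ω') :=
      expand _ ω' (integrable_B (μ ω') i g) (integrable_B (ν ω') i g)
    simp_rw [eA, eB]
    have h1 := hμ'.2 i ω' g
    have h2 := hν'.2 i ω' g
    calc ∑ ω, p ω * (t * ∫ x, (x i).1 ω' * g (x i) ∂(μ ω)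
            + (1 - t) * ∫ x, (x i).1 ω' * g (x i) ∂(ν ω))
        = t * ∑ ω, p ω * ∫ x, (x i).1 ω' * g (x i) ∂(μ ω)
          + (1 - t) * ∑ ω, p ω * ∫ x, (x i).1 ω' * g (x i) ∂(ν ω) := by
          rw [Finset.mul_sum, Finset.mul_sum, ← Finset.sum_add_distrib]
          exact Finset.sum_congr rfl fun ω _ => by ring
      _ = t * (p ω' * ∫ x, g (x i) ∂(μ ω')) + (1 - t) * (p ω' * ∫ x, g (x i) ∂(ν ω')) := by
          rw [h1, h2]
      _ = p ω' * (t * ∫ x, g (x i) ∂(μ ω') + (1 - t) * ∫ x, g (x i) ∂(ν ω')) := by ring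
  · have hset : { m : Ω → ProbabilityMeasure (Fin n → Belief Ω) |
        Feasible p n (fun ω => (m ω : Measure (Fin n → Belief Ω))) }
        = ⋂ (i : Fin n), ⋂ (ω' : Ω), ⋂ (g : BoundedContinuousFunction (Belief Ω) ℝ),
          { m : Ω → ProbabilityMeasure (Fin n → Belief Ω) |
            ∑ ω, p ω * ∫ x, (x i).1 ω' * g (x i) ∂((m ω : Measure (Fin n → Belief Ω)))
              = p ω' * ∫ x, g (x i) ∂((m ω' : Measure (Fin n → Belief Ω))) } := by
      ext m
      simp only [Set.mem_setOf_eq, Set.mem_iInter, feasible_iff_test p hp hpsum]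
      constructor
      · rintro ⟨-, h⟩ i ω' g
        exact h i ω' g
      · intro h
        exact ⟨fun ω => inferInstance, h⟩
    rw [hset]
    refine isClosed_iInter fun i => isClosed_iInter fun ω' => isClosed_iInter fun g => ?_
    refine isClosed_eq ?_ ?_
    · refine continuous_finset_sum _ fun ω _ => ?_
      refine Continuous.mul continuous_const ?_
      exact cont_int (BoundedContinuousFunction.mkOfCompact
        ⟨fun x => (x i).1 ω' * g (x i),
          ((cont_eval ω').comp (continuous_apply i)).mul
            (g.continuous.comp (continuous_apply i))⟩) ω
    · refine Continuous.mul continuous_const ?_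
      exact cont_int (BoundedContinuousFunction.mkOfCompact
        ⟨fun x => g (x i), g.continuous.comp (continuous_apply i)⟩) ω'
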